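/- arXiv:1904.09395 — 6 statements merged into one kernel-verified Lean document; each statement's English description precedes it below -/
import Mathlib

section
/- For every integer n ≥ 1, Γ(2 + n/2) < (π(n + 17)/17)^{n/2}, where Γ denotes the real Gamma function. -/
/-!
For even `n`, `Γ(2 + n/2)` is a factorial; for odd `n`, log-convexity of `Γ` bounds it by the
geometric mean of two consecutive factorials. Since the Stirling sequence decreases,
`log N! ≤ (N + 1/2) log N - N + 1`, and in both cases `log Γ(x + 2) ≤ (x + 3/2) log (x + 1) - x + 1/8`
with `x = n/2 ≥ 1`. After the Padé bound `log ((x + 17/2) / (x + 1)) ≥ 15 / (2x + 19/2)`, what is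
left is `3/2 log (x + 1) + 1/8 < (log (2π/17) + 1) x + 15x / (2x + 19/2)`. The constant
`log (2π/17) + 1 ≈ 0.00466` is tiny but positive, so the left side eventually loses; the margin
is smallest (about `0.1`) near `x = 300`. The case `n = 1` is `Γ(5/2) = 3√π/4`.
-/

open Real
open scoped Nat

lemma two_mul_sub_div_add_le_log_sub_log {a b : ℝ} (ha : 0 < a) (hab : a ≤ b) :
    2 * (b - a) / (a + b) ≤ log b - log a := by
  have h := le_log_one_add_of_nonneg (div_nonneg (sub_nonneg.2 hab) ha.le)
  have hb : 0 < b := ha.trans_le hab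
  rw [one_add_div ha.ne', add_sub_cancel, log_div hb.ne' ha.ne'] at h
  rw [div_add' _ _ _ ha.ne', mul_div_assoc', div_div_div_cancel_right₀ ha.ne'] at h
  convert h using 2
  ring

lemma log_sub_log_le_sub_div {a b : ℝ} (ha : 0 < a) (hb : 0 < b) :
    log b - log a ≤ (b - a) / a := by
  rw [← log_div hb.ne' ha.ne', sub_div, div_self ha.ne']
  exact log_le_sub_one_of_pos (div_pos hb ha)

lemma log_factorial_le {n : ℕ} (hn : n ≠ 0) :
    log n ! ≤ (n + 1 / 2) * log n - n + 1 := by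
  obtain ⟨m, rfl⟩ := Nat.exists_eq_succ_of_ne_zero hn
  have h := Stirling.log_stirlingSeq'_antitone (Nat.zero_le m)
  simp only [Function.comp_apply, Stirling.log_stirlingSeq_formula, Stirling.stirlingSeq_one] at h
  have hm : (0 : ℝ) < (m.succ : ℝ) := by positivity
  rw [log_div (exp_pos 1).ne' (by positivity), log_exp, log_sqrt (by norm_num),
    log_mul (by norm_num) hm.ne', log_div hm.ne' (exp_pos 1).ne', log_exp] at h
  linarith

lemma log_Gamma_nat_add_two_le (m : ℕ) :
    log (Gamma (m + 2)) ≤ (m + 3 / 2) * log (m + 1) - m := by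
  have h := log_factorial_le m.succ_ne_zero
  rw [← Gamma_nat_eq_factorial] at h
  push_cast at h
  rw [add_assoc, one_add_one_eq_two] at h
  linarith

lemma log_Gamma_nat_add_five_halves_le (k : ℕ) :
    log (Gamma (k + 5 / 2)) ≤ (k + 3 / 2) * log (k + 1) - k + log (k + 2) / 2 := by
  have hconv := convexOn_log_Gamma.2 (Set.mem_Ioi.2 (by positivity : (0 : ℝ) < k + 2))
    (Set.mem_Ioi.2 (by positivity : (0 : ℝ) < k + 1 + 2)) (by norm_num : (0 : ℝ) ≤ 1 / 2)
    (by norm_num : (0 : ℝ) ≤ 1 / 2) (by norm_num)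
  simp only [smul_eq_mul, Function.comp_apply] at hconv
  have hΓ : Gamma ((k : ℝ) + 1 + 2) = (k + 2) * Gamma (k + 2) := by
    rw [show (k : ℝ) + 1 + 2 = k + 2 + 1 by ring, Gamma_add_one (by positivity)]
  rw [show (1 / 2 : ℝ) * (k + 2) + 1 / 2 * (k + 1 + 2) = k + 5 / 2 by ring, hΓ,
    log_mul (by positivity) (Gamma_pos_of_pos (by positivity)).ne'] at hconv
  linarith [log_Gamma_nat_add_two_le k]

lemma add_three_halves_mul_log_add_one_add_log_add_two_div_two_le {y : ℝ} (hy : 1 ≤ y) :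
    (y + 3 / 2) * log (y + 1) + log (y + 2) / 2 + 3 / 8 ≤ (y + 2) * log (y + 3 / 2) := by
  have hlow : 1 / 2 ≤ (y + 3 / 2) * (log (y + 3 / 2) - log (y + 1)) := by
    refine le_trans ?_ (mul_le_mul_of_nonneg_left (two_mul_sub_div_add_le_log_sub_log
      (by linarith) (by linarith : y + 1 ≤ y + 3 / 2)) (by linarith))
    rw [mul_div_assoc', le_div_iff₀ (by linarith)]
    linarith
  have hup : log (y + 2) - log (y + 3 / 2) ≤ 1 / 5 := by
    refine (log_sub_log_le_sub_div (by linarith) (by linarith)).trans ?_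
    rw [div_le_iff₀ (by linarith)]
    linarith
  linarith

lemma log_Gamma_two_add_half_le {n : ℕ} (hn : 2 ≤ n) :
    log (Gamma (2 + n / 2)) ≤ (n / 2 + 3 / 2) * log (n / 2 + 1) - n / 2 + 1 / 8 := by
  obtain ⟨k, rfl | rfl⟩ := Nat.even_or_odd' n
  · have h := log_Gamma_nat_add_two_le k
    push_cast
    rw [show 2 + 2 * (k : ℝ) / 2 = k + 2 by ring, show 2 * (k : ℝ) / 2 = k by ring]
    linarith
  · have hk : (1 : ℝ) ≤ k := by exact_mod_cast (by omega : 1 ≤ k)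
    have h := add_three_halves_mul_log_add_one_add_log_add_two_div_two_le hk
    push_cast
    rw [show 2 + (2 * (k : ℝ) + 1) / 2 = k + 5 / 2 by ring,
      show (2 * (k : ℝ) + 1) / 2 + 1 = k + 3 / 2 by ring]
    linarith [log_Gamma_nat_add_five_halves_le k]

lemma three_halves_mul_log_add_one_lt {x : ℝ} (hx : 1 ≤ x) :
    3 / 2 * log (x + 1) + 1 / 8 < 0.00465 * x + 15 * x / (2 * x + 19 / 2) := by
  have tangent (j : ℕ) : log (x + 1) ≤ (x + 1) / 2 ^ j - 1 + j * 0.6931471808 := by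
    have h := log_sub_log_le_sub_div (pow_pos two_pos j) (by linarith : 0 < x + 1)
    rw [log_pow, sub_div, div_self (pow_pos two_pos j).ne'] at h
    nlinarith [log_two_lt_d9, (Nat.cast_nonneg j : (0 : ℝ) ≤ j)]
  -- On each interval below, the tangent line of `log` at the power of two `2 ^ j` nearest
  -- to `x + 1` turns the claim into a concave quadratic inequality, true at both endpoints.
  suffices ∃ j : ℕ, (3 / 2 * ((x + 1) / 2 ^ j - 1 + j * 0.6931471808) + 1 / 8 - 0.00465 * x) *
      (2 * x + 19 / 2) < 15 * x by
    obtain ⟨j, hj⟩ := this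
    rw [← lt_div_iff₀ (by linarith)] at hj
    linarith [tangent j]
  rcases le_or_gt x 4 with h4 | h4
  · exact ⟨1, by nlinarith [mul_nonneg (sub_nonneg.2 hx) (sub_nonneg.2 h4)]⟩
  rcases le_or_gt x 10 with h10 | h10
  · exact ⟨2, by nlinarith [mul_nonneg (sub_nonneg.2 h4.le) (sub_nonneg.2 h10)]⟩
  rcases le_or_gt x 20 with h20 | h20
  · exact ⟨3, by nlinarith [mul_nonneg (sub_nonneg.2 h10.le) (sub_nonneg.2 h20)]⟩
  rcases le_or_gt x 40 with h40 | h40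
  · exact ⟨4, by nlinarith [mul_nonneg (sub_nonneg.2 h20.le) (sub_nonneg.2 h40)]⟩
  rcases le_or_gt x 70 with h70 | h70
  · exact ⟨5, by nlinarith [mul_nonneg (sub_nonneg.2 h40.le) (sub_nonneg.2 h70)]⟩
  rcases le_or_gt x 120 with h120 | h120
  · exact ⟨6, by nlinarith [mul_nonneg (sub_nonneg.2 h70.le) (sub_nonneg.2 h120)]⟩
  rcases le_or_gt x 190 with h190 | h190
  · exact ⟨7, by nlinarith [mul_nonneg (sub_nonneg.2 h120.le) (sub_nonneg.2 h190)]⟩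
  rcases le_or_gt x 360 with h360 | h360
  · exact ⟨8, by nlinarith [mul_nonneg (sub_nonneg.2 h190.le) (sub_nonneg.2 h360)]⟩
  · exact ⟨9, by nlinarith [mul_nonneg (sub_nonneg.2 h360.le) (sub_nonneg.2 h360.le)]⟩

lemma lt_log_two_mul_pi_div_seventeen_add_one : 0.00465 < log (2 * π / 17) + 1 := by
  have h := one_sub_inv_le_log_of_pos (by positivity : 0 < 2 * π / 17 * exp 1)
  rw [log_mul (by positivity) (exp_pos 1).ne', log_exp] at h
  have hprod : 3.141592 * 2.7182818283 < π * exp 1 :=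
    mul_lt_mul'' pi_gt_d6 exp_one_gt_d9 (by norm_num) (by norm_num)
  have hinv : (2 * π / 17 * exp 1)⁻¹ < 1 - 0.00465 := by
    rw [inv_lt_comm₀ (by positivity) (by norm_num)]
    linarith
  linarith

lemma add_three_halves_mul_log_add_one_lt {x : ℝ} (hx : 1 ≤ x) :
    (x + 3 / 2) * log (x + 1) - x + 1 / 8 < x * log (2 * π / 17 * (x + 17 / 2)) := by
  have hpade := two_mul_sub_div_add_le_log_sub_log (by linarith : 0 < x + 1)
    (by linarith : x + 1 ≤ x + 17 / 2)
  rw [show 2 * (x + 17 / 2 - (x + 1)) / (x + 1 + (x + 17 / 2)) = 15 / (2 * x + 19 / 2) by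
    ring_nf] at hpade
  have hmul := mul_le_mul_of_nonneg_left hpade (by linarith : 0 ≤ x)
  have hconst := mul_le_mul_of_nonneg_left lt_log_two_mul_pi_div_seventeen_add_one.le
    (by linarith : 0 ≤ x)
  rw [mul_div_assoc', mul_comm x 15] at hmul
  rw [log_mul (by positivity) (by linarith)]
  linarith [three_halves_mul_log_add_one_lt hx]

lemma Gamma_five_halves_lt : Gamma (5 / 2) < (π * 18 / 17) ^ (1 / 2 : ℝ) := by
  have hΓ : Gamma (5 / 2) = 3 / 4 * √π := by
    rw [show (5 / 2 : ℝ) = 1 / 2 + 1 + 1 by norm_num, Gamma_add_one (by norm_num),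
      Gamma_add_one (by norm_num), Gamma_one_half_eq]
    ring
  rw [hΓ, ← sqrt_eq_rpow, lt_sqrt (by positivity), mul_pow, sq_sqrt pi_pos.le]
  linarith [pi_pos]

theorem gamma_lt_pow (n : ℕ) (hn : 1 ≤ n) :
    Real.Gamma (2 + (n : ℝ) / 2) < (π * ((n : ℝ) + 17) / 17) ^ ((n : ℝ) / 2) := by
  rcases hn.eq_or_lt with rfl | hn
  · convert Gamma_five_halves_lt using 2 <;> norm_num
  have hx : (1 : ℝ) ≤ n / 2 := by
    rw [le_div_iff₀ two_pos]
    exact_mod_cast hn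
  rw [← log_lt_log_iff (Gamma_pos_of_pos (by positivity)) (by positivity),
    log_rpow (by positivity), show π * (n + 17) / 17 = 2 * π / 17 * (n / 2 + 17 / 2) by ring]
  calc log (Gamma (2 + n / 2))
      ≤ (n / 2 + 3 / 2) * log (n / 2 + 1) - n / 2 + 1 / 8 := log_Gamma_two_add_half_le hn
    _ < n / 2 * log (2 * π / 17 * (n / 2 + 17 / 2)) := add_three_halves_mul_log_add_one_lt hx
end

section
/- The function φ(t) = ((π/8.5)(t + 8.5))^t / Γ(t + 2) is monotonically increasing on [310, ∞); that is, for all real numbers s, t with 310 ≤ s ≤ t, ((π/8.5)(s + 8.5))^s / Γ(s + 2) ≤ ((π/8.5)(t + 8.5))^t / Γ(t + 2). -/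
/-!
With `x = t + 2` and after taking logarithms, it suffices that
`x ↦ (x - 2) log (π / 8.5 (x + 6.5)) - log Γ(x)` is monotone on `[312, ∞)`. Replace `Γ` by Euler's sequence `GammaSeq x n`: its logarithmic derivative
`log n - ∑_{j ≤ n} 1 / (x + j)` is at most `log x - 1 / (2x)` by the trapezoid rule for `1 / x`,
while the derivative of the first term is at least `log x - 1 / (2x)` once `x ≥ 312`.
Monotonicity then survives the limit `n → ∞`. Both estimates of `log (1 + a⁻¹)` used here
(trapezoid from above, `2 / (2a + 1)` from below) come from its series in `1 / (2a + 1)`.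
-/

open Real Finset Filter Set Topology

lemma two_div_two_mul_add_one_le_log_one_add_inv {a : ℝ} (ha : 0 < a) :
    2 / (2 * a + 1) ≤ log (1 + a⁻¹) := by
  simpa [div_eq_mul_inv] using le_hasSum (hasSum_log_one_add_inv ha) 0 fun k _ ↦ by positivity

lemma log_one_add_inv_le {a : ℝ} (ha : 0 < a) :
    log (1 + a⁻¹) ≤ 1 / (2 * a) + 1 / (2 * (a + 1)) := by
  set y := 1 / (2 * a + 1) with hy
  have hy0 : 0 ≤ y := by positivity
  have hy1 : y ^ 2 < 1 := by
    rw [sq_lt_one_iff₀ hy0, hy, div_lt_one (by positivity)]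
    linarith
  have hgeom : HasSum (fun k : ℕ ↦ 2 * y * (y ^ 2) ^ k) (2 * y / (1 - y ^ 2)) := by
    simpa [div_eq_mul_inv] using (hasSum_geometric_of_lt_one (sq_nonneg y) hy1).mul_left (2 * y)
  calc log (1 + a⁻¹) ≤ 2 * y / (1 - y ^ 2) := by
        refine hasSum_le (fun k ↦ ?_) (hasSum_log_one_add_inv ha) hgeom
        rw [pow_succ, pow_mul, mul_comm _ y, ← mul_assoc]
        have : 1 / (2 * (k : ℝ) + 1) ≤ 1 := by
          rw [div_le_one (by positivity)]
          linarith [k.cast_nonneg (α := ℝ)]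
        gcongr
        linarith
    _ = 1 / (2 * a) + 1 / (2 * (a + 1)) := by
        have : (2 * a + 1) ^ 2 - 1 ≠ 0 := by nlinarith
        rw [hy]
        field_simp
        ring

lemma log_add_nat_sub_log_le_sum_range_inv {x : ℝ} (hx : 0 < x) (n : ℕ) :
    log (x + n) - log x ≤ ∑ j ∈ range (n + 1), 1 / (x + j) - 1 / (2 * x) - 1 / (2 * (x + n)) := by
  induction n with
  | zero =>
    norm_num
    linarith
  | succ n ih =>
    have hxn : 0 < x + n := by positivity
    have hstep : log (x + n + 1) - log (x + n) ≤ 1 / (2 * (x + n)) + 1 / (2 * (x + n + 1)) := by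
      rw [← log_div (by positivity) hxn.ne', show (x + n + 1) / (x + n) = 1 + (x + n)⁻¹ by
        field_simp]
      exact log_one_add_inv_le hxn
    rw [sum_range_succ]
    push_cast
    have : 1 / (x + n + 1) = 2 * (1 / (2 * (x + n + 1))) := by field_simp
    rw [← add_assoc, this]
    linarith

lemma log_nat_sub_sum_range_inv_le {x : ℝ} (hx : 0 < x) {n : ℕ} (hn : 0 < n) :
    log n - ∑ j ∈ range (n + 1), 1 / (x + j) ≤ log x - 1 / (2 * x) := by
  have hsum := log_add_nat_sub_log_le_sum_range_inv hx n
  have hlog : log n ≤ log (x + n) := log_le_log (by positivity) (by linarith)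
  have : 0 ≤ 1 / (2 * (x + n)) := by positivity
  linarith

lemma log_GammaSeq {x : ℝ} (hx : 0 < x) {n : ℕ} (hn : 0 < n) :
    log (GammaSeq x n) = x * log n + log n.factorial - ∑ j ∈ range (n + 1), log (x + j) := by
  have hn' : (0 : ℝ) < n := by exact_mod_cast hn
  rw [GammaSeq, log_div (by positivity) (prod_pos fun j _ ↦ by positivity).ne',
    log_mul (by positivity) (by positivity), log_rpow hn',
    log_prod fun j _ ↦ by positivity]

lemma hasDerivAt_log_GammaSeq {x : ℝ} (hx : 0 < x) {n : ℕ} (hn : 0 < n) :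
    HasDerivAt (fun y ↦ log (GammaSeq y n)) (log n - ∑ j ∈ range (n + 1), 1 / (x + j)) x := by
  have hsum : HasDerivAt (fun y ↦ ∑ j ∈ range (n + 1), log (y + j))
      (∑ j ∈ range (n + 1), 1 / (x + j)) x :=
    HasDerivAt.fun_sum fun j _ ↦ by
      simpa [one_div] using ((hasDerivAt_id x).add_const (j : ℝ)).log (by positivity)
  have := (((hasDerivAt_id x).mul_const (log n)).add_const (log n.factorial)).sub hsum
  refine (this.congr_deriv (by simp)).congr_of_eventuallyEq ?_
  filter_upwards [Ioi_mem_nhds hx] with y hy using log_GammaSeq hy hn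

lemma monotoneOn_sub_log_Gamma {g g' : ℝ → ℝ} {a : ℝ} (ha : 0 < a)
    (hg : ∀ x ∈ Ici a, HasDerivAt g (g' x) x) (hg' : ∀ x ∈ Ioi a, log x - 1 / (2 * x) ≤ g' x) :
    MonotoneOn (fun x ↦ g x - log (Gamma x)) (Ici a) := by
  intro s hs t ht hst
  have hderiv (n : ℕ) (hn : 0 < n) (x : ℝ) (hx : x ∈ Ici a) :=
    (hg x hx).sub (hasDerivAt_log_GammaSeq (ha.trans_le hx) hn)
  have hseq (n : ℕ) (hn : 0 < n) : g s - log (GammaSeq s n) ≤ g t - log (GammaSeq t n) := by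
    refine monotoneOn_of_hasDerivWithinAt_nonneg (convex_Ici a)
      (f' := fun x ↦ g' x - (log n - ∑ j ∈ range (n + 1), 1 / (x + j)))
      (fun x hx ↦ (hderiv n hn x hx).continuousAt.continuousWithinAt) (fun x hx ↦ ?_)
      (fun x hx ↦ ?_) hs ht hst
    · rw [interior_Ici] at hx ⊢
      exact (hderiv n hn x (mem_Ioi.1 hx).le).hasDerivWithinAt
    · rw [interior_Ici] at hx
      linarith [hg' x hx, log_nat_sub_sum_range_inv_le (ha.trans hx) hn]
  have hlim (x : ℝ) (hx : x ∈ Ici a) : Tendsto (fun n ↦ g x - log (GammaSeq x n)) atTop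
      (𝓝 (g x - log (Gamma x))) :=
    ((GammaSeq_tendsto_Gamma x).log (Gamma_pos_of_pos (ha.trans_le hx)).ne').const_sub (g x)
  exact le_of_tendsto_of_tendsto (hlim s hs) (hlim t ht) (eventually_atTop.2 ⟨1, hseq⟩)

lemma log_pi_div_eight_point_five_ge : -0.9954 ≤ log (π / 8.5) := by
  have hexp : 0.9954 ≤ exp (-0.0046) := by linarith [add_one_le_exp (-0.0046)]
  have : 8.5 ≤ π * exp 0.9954 := by
    calc (8.5 : ℝ) ≤ 3.141592 * 2.7182818283 * 0.9954 := by norm_num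
      _ ≤ π * exp 1 * exp (-0.0046) := by
        gcongr
        exacts [pi_gt_d6.le, exp_one_gt_d9.le]
      _ = π * exp 0.9954 := by rw [mul_assoc, ← exp_add]; norm_num
  rw [le_log_iff_exp_le (by positivity), exp_neg, inv_le_iff_one_le_mul₀ (exp_pos _),
    div_mul_eq_mul_div, one_le_div (by norm_num)]
  exact this

lemma log_sub_one_div_two_mul_le {x : ℝ} (hx : 312 ≤ x) :
    log x - 1 / (2 * x) ≤ log (π / 8.5 * (x + 6.5)) + (x - 2) / (x + 6.5) := by
  have hx0 : 0 < x := by linarith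
  have hpade : 13 / (2 * x + 6.5) ≤ log (x + 6.5) - log x := by
    have h := two_div_two_mul_add_one_le_log_one_add_inv (a := x / 6.5) (by positivity)
    rwa [show 1 + (x / 6.5)⁻¹ = (x + 6.5) / x by field_simp, log_div (by positivity) hx0.ne',
      show 2 / (2 * (x / 6.5) + 1) = 13 / (2 * x + 6.5) by field_simp; ring] at h
  have hrat : 0 ≤ -0.9954 + 13 / (2 * x + 6.5) + (x - 2) / (x + 6.5) + 1 / (2 * x) := by
    have hv : 0 ≤ x - 312 := by linarith
    rw [show -0.9954 + 13 / (2 * x + 6.5) + (x - 2) / (x + 6.5) + 1 / (2 * x) =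
        (-0.9954 * ((2 * x + 6.5) * (x + 6.5) * (2 * x)) + 13 * (x + 6.5) * (2 * x)
          + (x - 2) * (2 * x + 6.5) * (2 * x) + (2 * x + 6.5) * (x + 6.5))
          / ((2 * x + 6.5) * (x + 6.5) * (2 * x)) by field_simp]
    apply div_nonneg _ (by positivity)
    nlinarith [mul_nonneg hv (mul_nonneg hv hv), mul_nonneg hv hv]
  rw [log_mul (by positivity) (by positivity)]
  linarith [log_pi_div_eight_point_five_ge]

theorem phi_monotone (s t : ℝ) (hs : 310 ≤ s) (hst : s ≤ t) :
    ((π / 8.5) * (s + 8.5)) ^ s / Real.Gamma (s + 2) ≤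
      ((π / 8.5) * (t + 8.5)) ^ t / Real.Gamma (t + 2) := by
  set g : ℝ → ℝ := fun x ↦ (x - 2) * log (π / 8.5 * (x + 6.5))
  have hg (x : ℝ) (hx : x ∈ Ici (312 : ℝ)) :
      HasDerivAt g (log (π / 8.5 * (x + 6.5)) + (x - 2) / (x + 6.5)) x := by
    have hx0 : x + 6.5 ≠ 0 := by linarith [mem_Ici.1 hx]
    have hlog := (((hasDerivAt_id' x).add_const 6.5).const_mul (π / 8.5)).log
      (mul_ne_zero (by positivity) hx0)
    refine (((hasDerivAt_id' x).sub_const 2).fun_mul hlog).congr_deriv ?_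
    field_simp
  have hmono := monotoneOn_sub_log_Gamma (by norm_num) hg
    fun x hx ↦ log_sub_one_div_two_mul_le (le_of_lt hx)
  have hphi (u : ℝ) (hu : 310 ≤ u) :
      (π / 8.5 * (u + 8.5)) ^ u / Gamma (u + 2) = exp (g (u + 2) - log (Gamma (u + 2))) := by
    rw [exp_sub, exp_log (Gamma_pos_of_pos (by linarith)), rpow_def_of_pos (by positivity)]
    simp only [g]
    ring_nf
  rw [hphi s hs, hphi t (hs.trans hst)]
  exact exp_le_exp.2 (hmono (by simp; linarith) (by simp; linarith) (by linarith))
end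

section
/- Let γ denote the Euler–Mascheroni constant and define ρ(t) = ln(t + 8.5) − 8.5/(t + 8.5) − ln(t + e^{1−γ}) + ln(πe/8.5). Then for every real number t ≥ 310, ρ(t) > 0.0000796. -/
/-!
Write `a = exp (1 - γ)`. Since `γ > 0.573`, a Taylor bound gives `a < 1.535`, so `log (t + a)` may
be replaced by `log (t + 1.535)`. For `0 < c < b`, `log b - log c` is bounded below by
`2 (b - c) / (b + c)`, the first term of the series `log (b / c) = 2 artanh ((b - c) / (b + c))`;
this bounds `log (t + 8.5) - log (t + 1.535)` and gives `log (π e / 8.5) > 0.004663`. What remains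
is an inequality between rational functions of `t`, which holds for `t ≥ 310`.
-/

open Real

namespace Real

-- The first term of the positive series for `log (1 + a⁻¹)`, with `a = c / (b - c)`.
theorem two_mul_sub_div_add_le_log_sub_log {b c : ℝ} (hc : 0 < c) (hcb : c < b) :
    2 * (b - c) / (b + c) ≤ log b - log c := by
  have hbc : 0 < b - c := sub_pos.mpr hcb
  have hsum := hasSum_log_one_add_inv (div_pos hc hbc)
  have hfirst := le_hasSum hsum 0 fun k _ => by positivity
  have hone : 1 + (c / (b - c))⁻¹ = b / c := by field_simp; ring
  have hterm : (2 : ℝ) * (1 / (2 * (0 : ℕ) + 1)) * (1 / (2 * (c / (b - c)) + 1)) ^ (2 * 0 + 1)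
      = 2 * (b - c) / (b + c) := by
    have : b + c ≠ 0 := by linarith
    simp only [CharP.cast_eq_zero, mul_zero, zero_add, div_one, mul_one, pow_one]
    field_simp
    ring
  rw [hone, hterm, log_div (by linarith) hc.ne'] at hfirst
  exact hfirst

set_option maxRecDepth 4000 in
theorem eulerMascheroniConstant_gt : (0.573 : ℝ) < eulerMascheroniConstant := by
  have hseq := eulerMascheroniSeq_lt_eulerMascheroniConstant 127
  have hharmonic : ((54251 / 10000 : ℚ) : ℝ) < harmonic 127 :=
    Rat.cast_lt.mpr (by norm_num [harmonic_succ])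
  have hlog : log ((127 : ℕ) + 1) = 7 * log 2 := by
    rw [show ((127 : ℕ) : ℝ) + 1 = 2 ^ 7 by norm_num, log_pow]
    norm_num
  rw [eulerMascheroniSeq, hlog] at hseq
  linarith [log_two_lt_d9]

theorem exp_one_sub_eulerMascheroniConstant_lt : exp (1 - eulerMascheroniConstant) < 1.535 :=
  calc exp (1 - eulerMascheroniConstant)
      < exp 0.427 := exp_lt_exp.mpr (by linarith [eulerMascheroniConstant_gt])
    _ ≤ ∑ m ∈ Finset.range 4, (0.427 : ℝ) ^ m / m.factorial
          + 0.427 ^ 4 * (4 + 1) / (Nat.factorial 4 * 4) :=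
        exp_bound' (by norm_num) (by norm_num) (by norm_num)
    _ < 1.535 := by norm_num [Finset.sum_range_succ, Nat.factorial]

theorem log_pi_mul_exp_one_div_gt : (0.004663 : ℝ) < log (π * exp 1 / 8.5) := by
  have hπe : (8.539732 : ℝ) < π * exp 1 := by
    nlinarith [pi_gt_d6, exp_one_gt_d9]
  have hlog :=
    two_mul_sub_div_add_le_log_sub_log (by norm_num) (by linarith : (8.5 : ℝ) < π * exp 1)
  rw [← log_div (by positivity) (by norm_num)] at hlog
  refine lt_of_lt_of_le ?_ hlog
  rw [lt_div_iff₀ (by linarith)]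
  linarith

end Real

theorem rho_pos (t : ℝ) (ht : 310 ≤ t) :
    0.0000796 <
      Real.log (t + 8.5) - 8.5 / (t + 8.5)
        - Real.log (t + Real.exp (1 - Real.eulerMascheroniConstant)) + Real.log (π * Real.exp 1 / 8.5) := by
  have hmono : log (t + exp (1 - eulerMascheroniConstant)) ≤ log (t + 1.535) :=
    log_le_log (by positivity) (by linarith [exp_one_sub_eulerMascheroniConstant_lt])
  have hlog := two_mul_sub_div_add_le_log_sub_log (by linarith : (0 : ℝ) < t + 1.535)
    (by linarith : t + 1.535 < t + 8.5)
  have hrational : 0.0000796 - 0.004663 <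
      2 * (t + 8.5 - (t + 1.535)) / (t + 8.5 + (t + 1.535)) - 8.5 / (t + 8.5) := by
    rw [div_sub_div _ _ (by linarith) (by linarith), lt_div_iff₀ (by positivity)]
    nlinarith
  linarith [log_pi_mul_exp_one_div_gt]
end

section
/- For all real numbers a, b, c with 0 < a < b and c > 0, the integral ∫_a^b (ln(1 + c/t)/t) dt is at most (9/8)·ln( b(3a + 2c) / (a(3b + 2c)) ) + c(b − a)/(4ab). -/
/-!
The key input is the `[2/1]` Padé approximant of the logarithm: for `x ≥ 0`,
`log (1 + x) ≤ x (x + 6) / (2 (2 x + 3))`, since the difference vanishes at `0` and has derivative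
`4 x³ / ((2 (2 x + 3))² (1 + x)) ≥ 0`. With `x = c / t` this bounds the integrand by the rational
function `9 c / (4 t (3 t + 2 c)) + c / (4 t²)`, whose antiderivative
`9/8 (log t - log (3 t + 2 c)) - c / (4 t)` evaluates to the right-hand side.
-/

open Real Set intervalIntegral

theorem hasDerivAt_pade_sub_log {x : ℝ} (hx : 0 ≤ x) :
    HasDerivAt (fun y => y * (y + 6) / (2 * (2 * y + 3)) - log (1 + y))
      (4 * x ^ 3 / ((2 * (2 * x + 3)) ^ 2 * (1 + x))) x := by
  have hq : 2 * (2 * x + 3) ≠ 0 := by positivity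
  have hl : 1 + x ≠ 0 := by positivity
  refine ((((hasDerivAt_id' x).mul ((hasDerivAt_id' x).add_const 6)).div
    (((hasDerivAt_id' x).const_mul 2).add_const 3 |>.const_mul 2) hq).sub
    (((hasDerivAt_id' x).const_add 1).log hl)).congr_deriv ?_
  simp only [Pi.mul_apply]
  field_simp
  ring

theorem log_one_add_le_pade {x : ℝ} (hx : 0 ≤ x) :
    log (1 + x) ≤ x * (x + 6) / (2 * (2 * x + 3)) := by
  have hmono : MonotoneOn (fun y => y * (y + 6) / (2 * (2 * y + 3)) - log (1 + y)) (Ici 0) := by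
    refine monotoneOn_of_hasDerivWithinAt_nonneg (convex_Ici 0)
      (fun y hy => (hasDerivAt_pade_sub_log hy).continuousAt.continuousWithinAt)
      (fun y hy => (hasDerivAt_pade_sub_log (interior_subset hy)).hasDerivWithinAt) ?_
    intro y hy
    have : 0 ≤ y := interior_subset hy
    positivity
  have := hmono self_mem_Ici hx hx
  norm_num at this
  linarith

theorem log_one_add_div_div_le {c t : ℝ} (hc : 0 ≤ c) (ht : 0 < t) :
    log (1 + c / t) / t ≤ 9 * c / (4 * t * (3 * t + 2 * c)) + c / (4 * t ^ 2) := by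
  calc log (1 + c / t) / t ≤ c / t * (c / t + 6) / (2 * (2 * (c / t) + 3)) / t := by
        gcongr
        exact log_one_add_le_pade (by positivity)
    _ = 9 * c / (4 * t * (3 * t + 2 * c)) + c / (4 * t ^ 2) := by
        field_simp
        ring

theorem hasDerivAt_log_sub_log_sub_div {c t : ℝ} (hc : 0 ≤ c) (ht : 0 < t) :
    HasDerivAt (fun s => 9 / 8 * (log s - log (3 * s + 2 * c)) - c / 4 * s⁻¹)
      (9 * c / (4 * t * (3 * t + 2 * c)) + c / (4 * t ^ 2)) t := by
  have h3 : 3 * t + 2 * c ≠ 0 := by positivity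
  refine ((((hasDerivAt_log ht.ne').sub ((((hasDerivAt_id' t).const_mul 3).add_const (2 * c)).log
    h3)).const_mul (9 / 8)).sub ((hasDerivAt_inv (by positivity)).const_mul (c / 4))).congr_deriv ?_
  field_simp
  ring

theorem integral_log_bound (a b c : ℝ) (ha : 0 < a) (hab : a < b) (hc : 0 < c) :
    ∫ t in a..b, Real.log (1 + c / t) / t ≤
      (9 / 8) * Real.log (b * (3 * a + 2 * c) / (a * (3 * b + 2 * c))) + c * (b - a) / (4 * a * b) := by
  have hb : 0 < b := ha.trans hab
  have hpos : ∀ t ∈ uIcc a b, 0 < t := fun t ht => ha.trans_le (uIcc_of_le hab.le ▸ ht).1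
  have hint_log : IntervalIntegrable (fun t => log (1 + c / t) / t) MeasureTheory.volume a b :=
    ContinuousOn.intervalIntegrable <| by
      fun_prop (disch := intro t ht; have := hpos t ht; positivity)
  have hint_pade : IntervalIntegrable (fun t => 9 * c / (4 * t * (3 * t + 2 * c)) + c / (4 * t ^ 2))
      MeasureTheory.volume a b :=
    ContinuousOn.intervalIntegrable <| by
      fun_prop (disch := intro t ht; have := hpos t ht; positivity)
  calc ∫ t in a..b, log (1 + c / t) / t
      ≤ ∫ t in a..b, (9 * c / (4 * t * (3 * t + 2 * c)) + c / (4 * t ^ 2)) :=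
        integral_mono_on hab.le hint_log hint_pade fun t ht =>
          log_one_add_div_div_le hc.le (ha.trans_le ht.1)
    _ = (9 / 8 * (log b - log (3 * b + 2 * c)) - c / 4 * b⁻¹)
          - (9 / 8 * (log a - log (3 * a + 2 * c)) - c / 4 * a⁻¹) :=
        integral_eq_sub_of_hasDerivAt
          (fun t ht => hasDerivAt_log_sub_log_sub_div hc.le (hpos t ht)) hint_pade
    _ = _ := by
        rw [log_div (by positivity) (by positivity), log_mul hb.ne' (by positivity),
          log_mul ha.ne' (by positivity)]
        field_simp
        ring
end

section
/- The function ω(t) = (1/t)·ln((t + 18)/8.5) is convex on the interval [107.5, ∞); equivalently, its second derivative satisfies ω''(t) = (1/(t^3 (t+18)^2)) · ( 2(t+18)^2 ln((t+18)/8.5) − (3t^2 + 36t) ) ≥ 0 for all t ≥ 107.5. -/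
/-!
Differentiating twice, `t³ (t + a)² ω''(t) = 2 (t + a)² log ((t + a) / c) - (3 t² + 2 a t)`.
For `t, a ≥ 0` we have `3 t² + 2 a t ≤ 3 (t + a)²`, so `ω'' ≥ 0` as soon as
`log ((t + a) / c) ≥ 3 / 2`. With `a = 18`, `c = 8.5` and `t ≥ 107.5` the argument of the
logarithm is at least `8`, and `log 8 = 3 log 2 > 3 / 2`.
-/

open Real Filter Topology

variable {a c t : ℝ}

noncomputable def omegaFn (a c : ℝ) (t : ℝ) : ℝ := 1 / t * log ((t + a) / c)

noncomputable def omegaDeriv (a c : ℝ) (t : ℝ) : ℝ :=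
  -(1 / t ^ 2) * log ((t + a) / c) + 1 / (t * (t + a))

noncomputable def omegaDeriv2 (a c : ℝ) (t : ℝ) : ℝ :=
  1 / (t ^ 3 * (t + a) ^ 2) * (2 * (t + a) ^ 2 * log ((t + a) / c) - (3 * t ^ 2 + 2 * a * t))

theorem hasDerivAt_log_add_div (hta : t + a ≠ 0) (hc : c ≠ 0) :
    HasDerivAt (fun t => log ((t + a) / c)) (1 / (t + a)) t := by
  have h := (((hasDerivAt_id' t).add_const a).div_const c).log (div_ne_zero hta hc)
  exact h.congr_deriv (by field_simp)

theorem hasDerivAt_omegaFn (ht : t ≠ 0) (hta : t + a ≠ 0) (hc : c ≠ 0) :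
    HasDerivAt (omegaFn a c) (omegaDeriv a c t) t := by
  have h := ((hasDerivAt_const t 1).fun_div (hasDerivAt_id' t) ht).fun_mul
    (hasDerivAt_log_add_div hta hc)
  exact h.congr_deriv (by simp only [omegaDeriv]; field_simp; ring)

theorem hasDerivAt_omegaDeriv (ht : t ≠ 0) (hta : t + a ≠ 0) (hc : c ≠ 0) :
    HasDerivAt (omegaDeriv a c) (omegaDeriv2 a c t) t := by
  have hsq := ((hasDerivAt_const t 1).fun_div (hasDerivAt_pow 2 t) (pow_ne_zero 2 ht)).fun_neg
  have hprod := (hasDerivAt_const t 1).fun_div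
    ((hasDerivAt_id' t).fun_mul ((hasDerivAt_id' t).add_const a)) (mul_ne_zero ht hta)
  have h := (hsq.fun_mul (hasDerivAt_log_add_div hta hc)).fun_add hprod
  exact h.congr_deriv (by simp only [omegaDeriv2]; field_simp; ring)

theorem deriv_omegaFn_eventuallyEq (ht : t ≠ 0) (hta : t + a ≠ 0) (hc : c ≠ 0) :
    deriv (omegaFn a c) =ᶠ[𝓝 t] omegaDeriv a c := by
  have hta' : ∀ᶠ x in 𝓝 t, x + a ≠ 0 :=
    (continuous_add_const a).continuousAt.eventually_ne hta
  filter_upwards [eventually_ne_nhds ht, hta'] with x hx hxa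
  exact (hasDerivAt_omegaFn hx hxa hc).deriv

theorem differentiableAt_deriv_omegaFn (ht : t ≠ 0) (hta : t + a ≠ 0) (hc : c ≠ 0) :
    DifferentiableAt ℝ (deriv (omegaFn a c)) t :=
  (deriv_omegaFn_eventuallyEq ht hta hc).differentiableAt_iff.mpr
    (hasDerivAt_omegaDeriv ht hta hc).differentiableAt

theorem deriv_deriv_omegaFn (ht : t ≠ 0) (hta : t + a ≠ 0) (hc : c ≠ 0) :
    deriv (deriv (omegaFn a c)) t = omegaDeriv2 a c t := by
  rw [(deriv_omegaFn_eventuallyEq ht hta hc).deriv_eq, (hasDerivAt_omegaDeriv ht hta hc).deriv]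

theorem omegaDeriv2_nonneg (ht : 0 ≤ t) (ha : 0 ≤ a) (hlog : 3 / 2 ≤ log ((t + a) / c)) :
    0 ≤ omegaDeriv2 a c t := by
  have hquad : 3 * t ^ 2 + 2 * a * t ≤ 3 * (t + a) ^ 2 := by nlinarith [mul_nonneg ha ht]
  have hbracket : 3 * (t + a) ^ 2 ≤ 2 * (t + a) ^ 2 * log ((t + a) / c) := by
    nlinarith [sq_nonneg (t + a)]
  have := sub_nonneg.mpr (hquad.trans hbracket)
  unfold omegaDeriv2
  positivity

theorem convexOn_omegaFn {s : ℝ} (hs : 0 < s) (ha : 0 ≤ a) (hc : 0 < c)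
    (hlog : 3 / 2 ≤ log ((s + a) / c)) : ConvexOn ℝ (Set.Ici s) (omegaFn a c) := by
  have hne : ∀ t, s ≤ t → t ≠ 0 ∧ t + a ≠ 0 := fun t ht =>
    ⟨by linarith, by linarith⟩
  refine convexOn_of_deriv2_nonneg' (convex_Ici s) (fun t ht => ?_) (fun t ht => ?_)
    fun t (hst : s ≤ t) => ?_
  · obtain ⟨ht0, hta⟩ := hne t ht
    exact (hasDerivAt_omegaFn ht0 hta hc.ne').differentiableAt.differentiableWithinAt
  · obtain ⟨ht0, hta⟩ := hne t ht
    exact (differentiableAt_deriv_omegaFn ht0 hta hc.ne').differentiableWithinAt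
  · obtain ⟨ht0, hta⟩ := hne t hst
    rw [Function.iterate_succ_apply, Function.iterate_one,
      deriv_deriv_omegaFn ht0 hta hc.ne']
    exact omegaDeriv2_nonneg (hs.le.trans hst) ha (hlog.trans (by gcongr))

theorem three_halves_le_log_add_eighteen_div {t : ℝ} (ht : 107.5 ≤ t) :
    3 / 2 ≤ log ((t + 18) / 8.5) := by
  have hlog8 : log 8 = 3 * log 2 := by
    rw [show (8 : ℝ) = 2 ^ 3 by norm_num, log_pow]; norm_num
  calc (3 / 2 : ℝ) ≤ 3 * log 2 := by linarith [log_two_gt_d9]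
    _ = log 8 := hlog8.symm
    _ ≤ log ((t + 18) / 8.5) := by
      gcongr
      rw [le_div_iff₀ (by norm_num)]
      linarith

theorem omega_convex :
    ConvexOn ℝ (Set.Ici (107.5 : ℝ)) (fun t => (1 / t) * Real.log ((t + 18) / 8.5)) ∧
    ∀ t : ℝ, 107.5 ≤ t →
      deriv (deriv (fun t : ℝ => (1 / t) * Real.log ((t + 18) / 8.5))) t =
        (1 / (t ^ 3 * (t + 18) ^ 2)) *
          (2 * (t + 18) ^ 2 * Real.log ((t + 18) / 8.5) - (3 * t ^ 2 + 36 * t)) ∧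
      0 ≤ (1 / (t ^ 3 * (t + 18) ^ 2)) *
          (2 * (t + 18) ^ 2 * Real.log ((t + 18) / 8.5) - (3 * t ^ 2 + 36 * t)) := by
  have hform : ∀ t : ℝ, omegaDeriv2 18 8.5 t =
      1 / (t ^ 3 * (t + 18) ^ 2) *
        (2 * (t + 18) ^ 2 * log ((t + 18) / 8.5) - (3 * t ^ 2 + 36 * t)) := fun t => by
    simp only [omegaDeriv2]; ring
  refine ⟨convexOn_omegaFn (by norm_num) (by norm_num) (by norm_num)
    (three_halves_le_log_add_eighteen_div le_rfl), fun t ht => ?_⟩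
  rw [← hform]
  exact ⟨deriv_deriv_omegaFn (by linarith) (by linarith) (by norm_num),
    omegaDeriv2_nonneg (by linarith) (by norm_num) (three_halves_le_log_add_eighteen_div ht)⟩
end

section
/- For every integer n ≥ 109, the quantity (n/8.5 + 2) · 2^{827/420} · 3^{−8/15} · 79.06 · ∏_{k=109}^{n} (k/8.5 + 2)^{1/(k−1)} is strictly less than 8.1 · (n/8.5 + 2) · ((2n − 1)/17)^{(1/2)·ln((2n − 1)/17)}. -/
/-!
Dividing by `n / 8.5 + 2` and taking logarithms, the claim becomes
`c + ∑_{k=109}^n log (k / 8.5 + 2) / (k - 1) < log 8.1 + L(n)² / 2` with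
`c = log (2^{827/420} 3^{-8/15} 79.06)` and `L(n) = log ((2n - 1) / 17)`, which we prove with the
extra margin `361 / (20n + 70)` on the left, by induction on `n`.

The base case `n = 109` holds with room of only about `2·10⁻⁴`, hence the seven-digit bounds on
the logarithms of a few constants. In the step to `x = n + 1` the right side grows by
`(L(x)² - L(x-1)²) / 2 = L(x) v - v² / 2` with `v = log ((2x - 1) / (2x - 3)) ≈ 1 / (x - 1)`,
which matches the new summand `(L(x) + log ((2x + 34) / (2x - 1))) / (x - 1)` up to about
`17.5 / x²`; the margin drops by about `18 / x²` and absorbs this. Truncated Taylor series of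
`log (1 - y)` turn the step into an inequality between rational functions of `x`.
-/

open Real Finset

lemma sum_range_add_log_one_sub_mem_Icc {y : ℝ} (h0 : 0 ≤ y) (h1 : y < 1) (n : ℕ) :
    (∑ i ∈ range n, y ^ (i + 1) / (i + 1)) + log (1 - y) ∈
      Set.Icc (-(y ^ (n + 1) / (1 - y))) (y ^ (n + 1) / (1 - y)) := by
  have h := abs_log_sub_add_sum_range_le (x := y) (by rwa [abs_of_nonneg h0]) n
  rw [abs_of_nonneg h0] at h
  exact abs_le.mp h

lemma le_neg_log_one_sub {y : ℝ} (h0 : 0 ≤ y) (h1 : y < 1) :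
    y + y ^ 2 / 2 - y ^ 3 / (1 - y) ≤ -log (1 - y) := by
  have h := (sum_range_add_log_one_sub_mem_Icc h0 h1 2).2
  norm_num [sum_range_succ] at h
  linarith

lemma neg_log_one_sub_le {y : ℝ} (h0 : 0 ≤ y) (h1 : y < 1) :
    -log (1 - y) ≤ y + y ^ 2 / 2 + y ^ 3 / 3 + y ^ 4 / (1 - y) := by
  have h := (sum_range_add_log_one_sub_mem_Icc h0 h1 3).1
  norm_num [sum_range_succ] at h
  linarith

lemma prod_rpow_eq_exp_sum {ι : Type*} (s : Finset ι) {f : ι → ℝ} (hf : ∀ i ∈ s, 0 < f i)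
    (g : ι → ℝ) : ∏ i ∈ s, f i ^ g i = exp (∑ i ∈ s, log (f i) * g i) := by
  rw [exp_sum]
  exact prod_congr rfl fun i hi => rpow_def_of_pos (hf i hi) _

lemma log_three_bounds : 1.0986121 < log 3 ∧ log 3 < 1.0986124 := by
  obtain ⟨h1, h2⟩ := sum_range_add_log_one_sub_mem_Icc (y := 1 / 9) (by norm_num)
    (by norm_num) 6
  have hl : log (1 - 1 / 9 : ℝ) = 3 * log 2 - 2 * log 3 := by
    rw [show (1 - 1 / 9 : ℝ) = 2 ^ 3 / 3 ^ 2 by norm_num, log_div (by norm_num) (by norm_num),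
      log_pow, log_pow]
    push_cast; ring
  rw [hl] at h1 h2
  norm_num [sum_range_succ] at h1 h2 ⊢
  constructor <;> linarith [log_two_gt_d9, log_two_lt_d9]

lemma log_five_lt : log 5 < 1.6094386 := by
  obtain ⟨h1, -⟩ := sum_range_add_log_one_sub_mem_Icc (y := 1 / 5) (by norm_num) (by norm_num) 8
  have hl : log (1 - 1 / 5 : ℝ) = 2 * log 2 - log 5 := by
    rw [show (1 - 1 / 5 : ℝ) = 2 ^ 2 / 5 by norm_num, log_div (by norm_num) (by norm_num),
      log_pow]
    push_cast; ring
  rw [hl] at h1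
  norm_num [sum_range_succ] at h1 ⊢
  linarith [log_two_lt_d9]

lemma log_79_06_lt : log 79.06 < 4.3702092 := by
  obtain ⟨-, h2⟩ := sum_range_add_log_one_sub_mem_Icc (y := 97 / 4050) (by norm_num)
    (by norm_num) 3
  have hl : log (1 - 97 / 4050 : ℝ) = log 79.06 - 4 * log 3 := by
    rw [show (1 - 97 / 4050 : ℝ) = 79.06 / 3 ^ 4 by norm_num, log_div (by norm_num) (by norm_num),
      log_pow]
    push_cast; ring
  rw [hl] at h2
  norm_num [sum_range_succ] at h2 ⊢
  linarith [log_three_bounds.2]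

lemma log_8_1_gt : 2.0918622 < log 8.1 := by
  have hl : log 8.1 = 4 * log 3 - log 2 - log 5 := by
    rw [show (8.1 : ℝ) = 3 ^ 4 / (2 * 5) by norm_num, log_div (by norm_num) (by norm_num),
      log_mul (by norm_num) (by norm_num), log_pow]
    push_cast; ring
  rw [hl]
  linarith [log_two_lt_d9, log_three_bounds.1, log_five_lt]

lemma log_217_div_17_gt : 2.5466828 < log (217 / 17) := by
  obtain ⟨h1, -⟩ := sum_range_add_log_one_sub_mem_Icc (y := 3 / 1088) (by norm_num)
    (by norm_num) 2
  have hl : log (1 - 3 / 1088 : ℝ) = log (217 / 17) - 6 * log 2 + log 5 := by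
    rw [show (1 - 3 / 1088 : ℝ) = 217 / 17 / (2 ^ 6 / 5) by norm_num,
      log_div (by norm_num : (217 / 17 : ℝ) ≠ 0) (by norm_num),
      log_div (by norm_num : (2 ^ 6 : ℝ) ≠ 0) (by norm_num), log_pow]
    push_cast; ring
  rw [hl] at h1
  norm_num [sum_range_succ] at h1 ⊢
  linarith [log_two_gt_d9, log_five_lt]

lemma log_252_div_17_lt : log (252 / 17) < 2.6990594 := by
  have hl : log (252 / 17 : ℝ) = 4 * log 2 + log (63 / 68) := by
    rw [show (252 / 17 : ℝ) = 2 ^ 4 * (63 / 68) by norm_num, log_mul (by norm_num) (by norm_num),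
      log_pow]
    push_cast; ring
  have h := log_le_sub_one_of_pos (show (0 : ℝ) < 63 / 68 by norm_num)
  rw [hl]
  norm_num at h ⊢
  linarith [log_two_lt_d9]

lemma log_le_div_sixteen_add {t : ℝ} (ht : 0 < t) : log t ≤ t / 16 + 1.77259 := by
  have h := log_le_sub_one_of_pos (div_pos ht (by norm_num : (0 : ℝ) < 16))
  rw [log_div ht.ne' (by norm_num), show (16 : ℝ) = 2 ^ 4 by norm_num, log_pow] at h
  push_cast at h
  linarith [log_two_lt_d9]

lemma one_div_sub_log_le {x : ℝ} (hx : 3 / 2 < x) :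
    1 / (x - 1) - log ((2 * x - 1) / (2 * x - 3)) ≤
      1 / ((x - 1) * (2 * x - 1) ^ 2) + 8 / ((2 * x - 1) ^ 2 * (2 * x - 3)) := by
  have hx2 : 0 < 2 * x - 1 := by linarith
  have h := le_neg_log_one_sub (y := 2 / (2 * x - 1)) (by positivity)
    (by rw [div_lt_one hx2]; linarith)
  have : x - 1 ≠ 0 := by linarith
  have : x * 2 - 1 ≠ 0 := by linarith
  have : x * 2 - 3 ≠ 0 := by linarith
  have hA : 1 - 2 / (2 * x - 1) = ((2 * x - 1) / (2 * x - 3))⁻¹ := by field_simp; ring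
  have e : 1 / (x - 1) - (2 / (2 * x - 1) + (2 / (2 * x - 1)) ^ 2 / 2
      - (2 / (2 * x - 1)) ^ 3 / ((2 * x - 1) / (2 * x - 3))⁻¹) =
      1 / ((x - 1) * (2 * x - 1) ^ 2) + 8 / ((2 * x - 1) ^ 2 * (2 * x - 3)) := by
    field_simp; ring
  rw [hA, log_inv, neg_neg] at h
  linarith

lemma log_div_le_two_div {x : ℝ} (hx : 3 / 2 < x) :
    log ((2 * x - 1) / (2 * x - 3)) ≤ 2 / (2 * x - 3) := by
  have h3 : 0 < 2 * x - 3 := by linarith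
  have h := log_le_sub_one_of_pos (div_pos (by linarith : 0 < 2 * x - 1) h3)
  rwa [div_sub_one h3.ne', show 2 * x - 1 - (2 * x - 3) = 2 by ring] at h

lemma log_div_le_taylor {x : ℝ} (hx : 1 / 2 < x) :
    log ((2 * x + 34) / (2 * x - 1)) ≤ 35 / (2 * x + 34) + (35 / (2 * x + 34)) ^ 2 / 2
      + (35 / (2 * x + 34)) ^ 3 / 3 + (35 / (2 * x + 34)) ^ 4 / ((2 * x - 1) / (2 * x + 34)) := by
  have h4 : 0 < 2 * x + 34 := by linarith
  have h := neg_log_one_sub_le (y := 35 / (2 * x + 34)) (by positivity)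
    (by rw [div_lt_one h4]; linarith)
  rwa [show 1 - 35 / (2 * x + 34) = (2 * x - 1) / (2 * x + 34) by field_simp; ring, ← log_inv,
    inv_div] at h

lemma step_rational_bound {x : ℝ} (hx : 110 ≤ x) :
    ((2 * x - 1) / 272 + 1.77259) *
        (1 / ((x - 1) * (2 * x - 1) ^ 2) + 8 / ((2 * x - 1) ^ 2 * (2 * x - 3)))
      + (35 / (2 * x + 34) + (35 / (2 * x + 34)) ^ 2 / 2 + (35 / (2 * x + 34)) ^ 3 / 3
          + (35 / (2 * x + 34)) ^ 4 / ((2 * x - 1) / (2 * x + 34))) / (x - 1)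
      + (2 / (2 * x - 3)) ^ 2 / 2
      ≤ 361 / (20 * x + 50) - 361 / (20 * x + 70) := by
  have : x - 1 ≠ 0 := by linarith
  have : x * 2 - 1 ≠ 0 := by linarith
  have : x * 2 - 3 ≠ 0 := by linarith
  have : x * 2 + 34 ≠ 0 := by linarith
  have : x * 20 + 50 ≠ 0 := by linarith
  have : x * 20 + 70 ≠ 0 := by linarith
  rw [← sub_nonneg]
  convert_to 0 ≤ (26640000 * x ^ 9 + 11060686560 * x ^ 8 - 148457222416 * x ^ 7
      - 60488700527520 * x ^ 6 - 274724321323616 * x ^ 5 + 1143771781213142 * x ^ 4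
      - 497443621940709 * x ^ 3 - 1197512095943339 * x ^ 2 + 1040103198468069 * x
      - 220447471280115) / (6375 * (x - 1) * (2 * x - 1) ^ 3 * (2 * x - 3) ^ 2 * (2 * x + 34) ^ 3
        * (20 * x + 50) * (20 * x + 70)) using 2
  · field_simp
    ring
  -- in powers of `x - 110` the numerator has only positive coefficients
  have hs : 0 ≤ x - 110 := by linarith
  apply div_nonneg
  · nlinarith [pow_nonneg hs 2, pow_nonneg hs 3, pow_nonneg hs 4, pow_nonneg hs 5,
      pow_nonneg hs 6, pow_nonneg hs 7, pow_nonneg hs 8, pow_nonneg hs 9]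
  · have : 0 < x - 1 := by linarith
    have : 0 < 2 * x - 1 := by linarith
    have : 0 < 2 * x - 3 := by linarith
    positivity

lemma log_step {x : ℝ} (hx : 110 ≤ x) :
    log (x / 8.5 + 2) / (x - 1) + 361 / (20 * x + 70) ≤
      361 / (20 * x + 50) + (log ((2 * x - 1) / 17) ^ 2 - log ((2 * x - 3) / 17) ^ 2) / 2 := by
  have hx1 : 0 < x - 1 := by linarith
  have hx2 : 0 < 2 * x - 1 := by linarith
  have hx3 : 0 < 2 * x - 3 := by linarith
  have hQ : log ((2 * x - 3) / 17) =
      log ((2 * x - 1) / 17) - log ((2 * x - 1) / (2 * x - 3)) := by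
    rw [← log_div (by positivity) (by positivity)]
    congr 1
    field_simp
  have hR : log (x / 8.5 + 2) =
      log ((2 * x - 1) / 17) + log ((2 * x + 34) / (2 * x - 1)) := by
    have : x * 2 - 1 ≠ 0 := by linarith
    rw [← log_mul (by positivity) (by positivity)]
    congr 1
    field_simp
    ring
  have hP0 : 0 ≤ log ((2 * x - 1) / 17) :=
    log_nonneg (by rw [le_div_iff₀ (by norm_num)]; linarith)
  have hP := log_le_div_sixteen_add (t := (2 * x - 1) / 17) (by positivity)
  have hv0 : 0 ≤ log ((2 * x - 1) / (2 * x - 3)) :=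
    log_nonneg (by rw [le_div_iff₀ hx3]; linarith)
  have hv := pow_le_pow_left₀ hv0 (log_div_le_two_div (x := x) (by linarith)) 2
  have h1 := mul_le_mul_of_nonneg_left (one_div_sub_log_le (x := x) (by linarith)) hP0
  have h2 := mul_le_mul_of_nonneg_right
    (show log ((2 * x - 1) / 17) ≤ (2 * x - 1) / 272 + 1.77259 by linarith)
    (by positivity : 0 ≤ 1 / ((x - 1) * (2 * x - 1) ^ 2) + 8 / ((2 * x - 1) ^ 2 * (2 * x - 3)))
  have h3 := div_le_div_of_nonneg_right (log_div_le_taylor (x := x) (by linarith)) hx1.le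
  rw [hQ, hR]
  set P := log ((2 * x - 1) / 17)
  set v := log ((2 * x - 1) / (2 * x - 3))
  set w := log ((2 * x + 34) / (2 * x - 1))
  have key : (P + w) / (x - 1) - (P ^ 2 - (P - v) ^ 2) / 2
      = P * (1 / (x - 1) - v) + w / (x - 1) + v ^ 2 / 2 := by ring
  linarith [step_rational_bound hx]

lemma sum_log_add_margin_le (n : ℕ) (hn : 109 ≤ n) :
    827 / 420 * log 2 - 8 / 15 * log 3 + log 79.06
        + ∑ k ∈ Icc 109 n, log ((k : ℝ) / 8.5 + 2) / ((k : ℝ) - 1)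
        + 361 / (20 * (n : ℝ) + 70)
      ≤ log 8.1 + log ((2 * (n : ℝ) - 1) / 17) ^ 2 / 2 := by
  induction n, hn using Nat.le_induction with
  | base =>
    have hL := pow_le_pow_left₀ (by norm_num) log_217_div_17_gt.le 2
    norm_num
    linarith [log_two_lt_d9, log_three_bounds.1, log_79_06_lt, log_8_1_gt, log_252_div_17_lt]
  | succ n hn ih =>
    rw [sum_Icc_succ_top (by omega)]
    have hstep := log_step (x := n + 1) (by norm_cast; omega)
    push_cast
    ring_nf at hstep ih ⊢
    linarith

theorem kz_bound_16 (n : ℕ) (hn : 109 ≤ n) :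
    ((n : ℝ) / 8.5 + 2) * (2 : ℝ) ^ ((827 : ℝ) / 420) * (3 : ℝ) ^ (-(8 : ℝ) / 15) * 79.06 *
        ∏ k ∈ Finset.Icc 109 n, ((k : ℝ) / 8.5 + 2) ^ (1 / ((k : ℝ) - 1)) <
      8.1 * ((n : ℝ) / 8.5 + 2) *
        ((2 * (n : ℝ) - 1) / 17) ^ ((1 / 2) * Real.log ((2 * (n : ℝ) - 1) / 17)) := by
  have hn' : (109 : ℝ) ≤ n := by exact_mod_cast hn
  rw [prod_rpow_eq_exp_sum _ (fun k _ => by positivity), rpow_def_of_pos two_pos,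
    rpow_def_of_pos three_pos, rpow_def_of_pos (by linarith),
    ← exp_log (by norm_num : (0 : ℝ) < 79.06), mul_comm 8.1,
    ← exp_log (by norm_num : (0 : ℝ) < 8.1)]
  simp only [mul_assoc, ← exp_add, mul_one_div]
  refine mul_lt_mul_of_pos_left (exp_lt_exp.2 ?_) (by positivity)
  have hmargin : 0 < 361 / (20 * (n : ℝ) + 70) := by positivity
  linarith [sum_log_add_margin_le n hn]
end
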